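/- Fix a, b, c > 0 with a + b + c = 1. Define ν(z) = ζ(z)/z where ζ(z) = √(z²+z+1) + (1/2)·√((zb+zc+a+c)² − 4abz) + ((b−c)z − a − c)/2 − 1. Then lim_{z→0⁺} ν(z) = 1/2 + bc/(a+c) and lim_{z→∞} ν(z) = 1 + b. -/

import Mathlib

/-!
Both radicands in `ζ` are quadratics in `z`, and `ζ(0) = 0`. Near `0`, `ν(z) = ζ(z)/z` is a
difference quotient, so its limit is `ζ'(0)`, computed from the rule `(√q)'(0) = q'(0) / (2√q(0))`.
At infinity, `√(αz² + βz + γ)/z = √(α + β/z + γ/z²) → √α`, and the linear part of `ζ` contributes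
its slope.
-/

open Real Filter

/-- The function `ζ(z)` from the arctic-curve parametrization. -/
noncomputable def zeta (a b c z : ℝ) : ℝ :=
  Real.sqrt (z ^ 2 + z + 1) + Real.sqrt ((z * b + z * c + a + c) ^ 2 - 4 * a * b * z) / 2 +
    ((b - c) * z - a - c) / 2 - 1

/-- `ν(z) = ζ(z)/z`. -/
noncomputable def nuFn (a b c z : ℝ) : ℝ := zeta a b c z / z

open Topology

lemma tendsto_div_nhdsGT_zero_of_hasDerivAt {f : ℝ → ℝ} {f' : ℝ} (hf : HasDerivAt f f' 0)
    (h0 : f 0 = 0) : Tendsto (fun z => f z / z) (𝓝[>] 0) (𝓝 f') := by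
  simpa [h0, div_eq_inv_mul] using hf.tendsto_slope_zero_right

lemma hasDerivAt_sqrt_quadratic_zero (α β : ℝ) {γ : ℝ} (hγ : 0 < γ) :
    HasDerivAt (fun z => √(α * z ^ 2 + β * z + γ)) (β / (2 * √γ)) 0 := by
  have hq : HasDerivAt (fun z : ℝ => α * z ^ 2 + β * z + γ) β 0 := by
    simpa using
      (((hasDerivAt_pow 2 0).const_mul α).add ((hasDerivAt_id 0).const_mul β)).add_const γ
  simpa using hq.sqrt (by simpa using hγ.ne')

lemma sqrt_quadratic_div (α β γ : ℝ) {z : ℝ} (hz : 0 < z) :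
    √(α * z ^ 2 + β * z + γ) / z = √(α + β * z⁻¹ + γ * z⁻¹ ^ 2) := by
  have h : α + β * z⁻¹ + γ * z⁻¹ ^ 2 = (α * z ^ 2 + β * z + γ) / z ^ 2 := by
    field_simp
  rw [h, sqrt_div' _ (sq_nonneg z), sqrt_sq hz.le]

lemma tendsto_sqrt_quadratic_div_atTop (α β γ : ℝ) :
    Tendsto (fun z => √(α * z ^ 2 + β * z + γ) / z) atTop (𝓝 √α) := by
  have h : Tendsto (fun z : ℝ => α + β * z⁻¹ + γ * z⁻¹ ^ 2) atTop (𝓝 (α + β * 0 + γ * 0 ^ 2)) :=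
    ((tendsto_inv_atTop_zero.const_mul β).const_add α).add
      ((tendsto_inv_atTop_zero.pow 2).const_mul γ)
  rw [mul_zero, add_zero, zero_pow two_ne_zero, mul_zero, add_zero] at h
  refine h.sqrt.congr' ?_
  filter_upwards [eventually_gt_atTop 0] with z hz
  exact (sqrt_quadratic_div α β γ hz).symm

lemma zeta_eq_sqrt_quadratic (a b c z : ℝ) :
    zeta a b c z = √(1 * z ^ 2 + 1 * z + 1) +
      √((b + c) ^ 2 * z ^ 2 + (2 * (a + c) * (b + c) - 4 * a * b) * z + (a + c) ^ 2) / 2 +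
      (((b - c) * z - a - c) / 2 - 1) := by
  rw [zeta]
  ring_nf

section zeta

variable {a b c : ℝ}

lemma zeta_zero (hac : 0 ≤ a + c) : zeta a b c 0 = 0 := by
  rw [zeta_eq_sqrt_quadratic]
  simp only [zero_pow two_ne_zero, mul_zero, add_zero, zero_add, sqrt_one, sqrt_sq hac]
  ring

lemma hasDerivAt_zeta_zero (hac : 0 < a + c) :
    HasDerivAt (zeta a b c) (1 / 2 + b * c / (a + c)) 0 := by
  have h := ((hasDerivAt_sqrt_quadratic_zero 1 1 one_pos).add
    ((hasDerivAt_sqrt_quadratic_zero ((b + c) ^ 2) (2 * (a + c) * (b + c) - 4 * a * b)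
      (pow_pos hac 2)).div_const 2)).add
    (((((hasDerivAt_id (0 : ℝ)).const_mul (b - c)).sub_const a).sub_const c).div_const 2
      |>.sub_const 1)
  refine (h.congr_deriv ?_).congr_of_eventuallyEq (.of_forall (zeta_eq_sqrt_quadratic a b c))
  rw [sqrt_one, sqrt_sq hac.le]
  field_simp
  ring

lemma tendsto_zeta_div_atTop (hbc : 0 ≤ b + c) :
    Tendsto (fun z => zeta a b c z / z) atTop (𝓝 (1 + b)) := by
  have h := ((tendsto_sqrt_quadratic_div_atTop 1 1 1).add
    ((tendsto_sqrt_quadratic_div_atTop ((b + c) ^ 2) (2 * (a + c) * (b + c) - 4 * a * b)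
      ((a + c) ^ 2)).div_const 2)).add
    ((tendsto_inv_atTop_zero.const_mul ((a + c + 2) / 2)).const_sub ((b - c) / 2))
  rw [sqrt_one, sqrt_sq hbc, mul_zero, sub_zero] at h
  convert h.congr' ?_ using 2
  · ring
  filter_upwards [eventually_gt_atTop 0] with z hz
  rw [zeta_eq_sqrt_quadratic]
  field_simp
  ring

end zeta

theorem nu_limits_general (a b c : ℝ) (ha : 0 < a) (hb : 0 < b) (hc : 0 < c) :
    Tendsto (nuFn a b c) (nhdsWithin 0 (Set.Ioi 0)) (nhds (1 / 2 + b * c / (a + c))) ∧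
    Tendsto (nuFn a b c) atTop (nhds (1 + b)) :=
  ⟨tendsto_div_nhdsGT_zero_of_hasDerivAt (hasDerivAt_zeta_zero (by positivity))
      (zeta_zero (by positivity)),
    tendsto_zeta_div_atTop (by positivity)⟩

/-- `lim_{z→0⁺} ν(z) = 1/2 + bc/(a+c)` and `lim_{z→∞} ν(z) = 1 + b`. -/
theorem nu_limits (a b c : ℝ) (ha : 0 < a) (hb : 0 < b) (hc : 0 < c)
    (habc : a + b + c = 1) :
    Tendsto (nuFn a b c) (nhdsWithin 0 (Set.Ioi 0)) (nhds (1 / 2 + b * c / (a + c))) ∧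
    Tendsto (nuFn a b c) atTop (nhds (1 + b)) :=
  nu_limits_general a b c ha hb hc
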